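/- Under the hypotheses q ∣ N and M ∣ N, the extended width δ(𝔞) = [Mq,q²,N]/q² depends only on gcd(q, N): if q₁, q₂ ∣ N with gcd(q₁,N) = gcd(q₂,N) then δ at q₁ equals δ at q₂ (trivial), and more substantively if gcd(q₁, N) = gcd(q₂, N) as computed for arbitrary q₁, q₂ ∈ ℕ (not necessarily dividing N), then [Mq₁, q₁², N]/q₁² = [Mq₂, q₂², N]/q₂². -/

import Mathlib

/-!
Since `M ∣ N`, the extended width `δ = [Mq, q², N]/q²` divides `N`, so it is determined by its
valuations at the primes `p ∣ N`; and `v_p(δ) = max(v_p M + v_p q, 2 v_p q, v_p N) - 2 v_p q`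
depends on `q` only through `v_p q`.
-/

namespace Nat

theorem eq_of_factorization_eq_of_dvd {a b N : ℕ} (hN : N ≠ 0) (ha : a ∣ N) (hb : b ∣ N)
    (h : ∀ p : ℕ, p.Prime → p ∣ N → a.factorization p = b.factorization p) : a = b := by
  refine eq_of_factorization_eq (ne_zero_of_dvd_ne_zero hN ha) (ne_zero_of_dvd_ne_zero hN hb)
    fun p => ?_
  by_cases hp : p.Prime
  · by_cases hpN : p ∣ N
    · exact h p hp hpN
    · rw [factorization_eq_zero_of_not_dvd fun hpa => hpN (hpa.trans ha),
        factorization_eq_zero_of_not_dvd fun hpb => hpN (hpb.trans hb)]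
  · simp only [factorization_eq_zero_of_not_prime _ hp]

end Nat

def extendedWidth (M N q : ℕ) : ℕ := Nat.lcm (M * q) (Nat.lcm (q ^ 2) N) / q ^ 2

section extendedWidth

variable {M N q : ℕ}

theorem sq_dvd_lcm_mul_lcm_sq (M N q : ℕ) : q ^ 2 ∣ Nat.lcm (M * q) (Nat.lcm (q ^ 2) N) :=
  (Nat.dvd_lcm_left _ _).trans (Nat.dvd_lcm_right _ _)

/-- Each of `Mq`, `q²`, `N` divides `q² N`. -/
theorem extendedWidth_dvd (hq : q ≠ 0) (hMN : M ∣ N) : extendedWidth M N q ∣ N := by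
  have hlcm : Nat.lcm (M * q) (Nat.lcm (q ^ 2) N) ∣ q ^ 2 * N :=
    Nat.lcm_dvd ((mul_dvd_mul hMN (dvd_pow_self q two_ne_zero)).trans (mul_comm N _).dvd)
      (Nat.lcm_dvd (dvd_mul_right _ _) (dvd_mul_left _ _))
  exact (Nat.div_dvd_iff_dvd_mul (sq_dvd_lcm_mul_lcm_sq M N q) (by positivity)).2 hlcm

theorem factorization_extendedWidth (hM : M ≠ 0) (hN : N ≠ 0) (hq : q ≠ 0) (p : ℕ) :
    (extendedWidth M N q).factorization p
      = max (M.factorization p + q.factorization p)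
          (max (2 * q.factorization p) (N.factorization p)) - 2 * q.factorization p := by
  rw [extendedWidth, Nat.factorization_div (sq_dvd_lcm_mul_lcm_sq M N q),
    Nat.factorization_lcm (mul_ne_zero hM hq) (Nat.lcm_ne_zero (pow_ne_zero 2 hq) hN),
    Nat.factorization_lcm (pow_ne_zero 2 hq) hN]
  simp only [Finsupp.tsub_apply, Finsupp.sup_apply, Finsupp.add_apply,
    Nat.factorization_mul hM hq, Nat.factorization_pow, Finsupp.smul_apply, smul_eq_mul]

end extendedWidth

theorem extended_width_depends_on_gcd_general (M N q₁ q₂ : ℕ) (hN : 0 < N)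
    (hq₁ : 0 < q₁) (hq₂ : 0 < q₂) (hMN : M ∣ N)
    (h : ∀ p : ℕ, p.Prime → p ∣ N → q₁.factorization p = q₂.factorization p) :
    Nat.lcm (M * q₁) (Nat.lcm (q₁ ^ 2) N) / q₁ ^ 2
      = Nat.lcm (M * q₂) (Nat.lcm (q₂ ^ 2) N) / q₂ ^ 2 := by
  show extendedWidth M N q₁ = extendedWidth M N q₂
  have hM : M ≠ 0 := ne_zero_of_dvd_ne_zero hN.ne' hMN
  refine Nat.eq_of_factorization_eq_of_dvd hN.ne' (extendedWidth_dvd hq₁.ne' hMN)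
    (extendedWidth_dvd hq₂.ne' hMN) fun p hp hpN => ?_
  rw [factorization_extendedWidth hM hN.ne' hq₁.ne',
    factorization_extendedWidth hM hN.ne' hq₂.ne', h p hp hpN]

/-- The extended width `δ(𝔞) = [Mq, q², N]/q²` depends only on the `p`-adic valuations of
`q` at primes `p ∣ N`: if `v_p(q₁) = v_p(q₂)` for all primes `p ∣ N`, then
`[Mq₁, q₁², N]/q₁² = [Mq₂, q₂², N]/q₂²`. -/
theorem extended_width_depends_on_gcd (M N q₁ q₂ : ℕ) (hM : 0 < M) (hN : 0 < N)
    (hq₁ : 0 < q₁) (hq₂ : 0 < q₂) (hMN : M ∣ N)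
    (h : ∀ p : ℕ, p.Prime → p ∣ N → q₁.factorization p = q₂.factorization p) :
    Nat.lcm (M * q₁) (Nat.lcm (q₁ ^ 2) N) / q₁ ^ 2
      = Nat.lcm (M * q₂) (Nat.lcm (q₂ ^ 2) N) / q₂ ^ 2 :=
  extended_width_depends_on_gcd_general M N q₁ q₂ hN hq₁ hq₂ hMN h
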